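/- If T is a random tree with law π satisfying the Markov hypotheses with tree-shift f, then for every v ∈ V, conditionally on T(v) = 1 the random variables T(w), w ∈ f⁻¹(v), are independent; that is, for every function ε : f⁻¹(v) → {0,1}, P(T(w) = ε(w) for all w ∈ f⁻¹(v) | T(v)=1) = Π_{w∈f⁻¹(v)} P(T(w) = ε(w) | T(v)=1). -/

import Mathlib

open Finset
open scoped Classical

/-- The probability, under the law `π` on the finite collection `TT` of trees,
of the event `E`. -/
noncomputable def prOf {A : Type*} [DecidableEq A]
    (TT : Finset (Finset (List A))) (π : Finset (List A) → ℝ)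
    (E : Finset (List A) → Prop) : ℝ :=
  ∑ t ∈ TT, if E t then π t else 0

/-- The mean occupation `μ_π(v) = P(T(v) = 1)` of node `v`. -/
noncomputable def muOf {A : Type*} [DecidableEq A]
    (TT : Finset (Finset (List A))) (π : Finset (List A) → ℝ) (v : List A) : ℝ :=
  prOf TT π (fun t => v ∈ t)

/-- `f` is a tree-shift on `V`: for each nonempty node `w ∈ V`, `f w` is the father or
a brother of `w`, and some iterate of `f` sends `w` to the root `λ = []`. -/
def IsTreeShift {A : Type*} (V : Finset (List A)) (f : List A → List A) : Prop :=
  (∀ (a : A) (u : List A), (a :: u) ∈ V →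
      f (a :: u) = u ∨ ∃ b : A, b ≠ a ∧ f (a :: u) = b :: u) ∧
  (∀ v ∈ V, v ≠ [] → ∃ k : ℕ, f^[k] v = [])

/-- The Markov hypotheses for a random tree with law `π` (supported on the finite
collection `TT` of trees with node set `V`) with respect to the tree-shift `f`:
(a) `0 < μ_π(w) < μ_π(f w) < 1`; (b) `P(T(w) = 1, T(f w) = 0) = 0`;
(c) the Markov conditional-probability property. -/
def MarkovHyp {A : Type*} [DecidableEq A] (V : Finset (List A))
    (TT : Finset (Finset (List A))) (π : Finset (List A) → ℝ)
    (f : List A → List A) : Prop :=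
  (∀ w ∈ V, w ≠ [] →
      0 < muOf TT π w ∧ muOf TT π w < muOf TT π (f w) ∧ muOf TT π (f w) < 1) ∧
  (∀ w ∈ V, w ≠ [] → prOf TT π (fun t => w ∈ t ∧ f w ∉ t) = 0) ∧
  (∀ w ∈ V, w ≠ [] → ∀ I J : Finset (List A), I ⊆ V → J ⊆ V →
      f w ∈ I → w ∉ I ∪ J →
      0 < prOf TT π (fun t => I ⊆ t ∧ ∀ u ∈ J, u ∉ t) →
      prOf TT π (fun t => w ∈ t ∧ I ⊆ t ∧ ∀ u ∈ J, u ∉ t) /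
          prOf TT π (fun t => I ⊆ t ∧ ∀ u ∈ J, u ∉ t) =
        prOf TT π (fun t => w ∈ t ∧ f w ∈ t) / prOf TT π (fun t => f w ∈ t))

/-!
Fix `v` and induct on a set `S` of children of `v`. To add a child `w`, apply the Markov
hypothesis (c) to `w`, conditioning on `T(v) = 1` together with the values already prescribed
on `S`: this splits off the factor `P(T(w) = 1 | T(v) = 1)`, and the factor for `T(w) = 0` follows
by complement. The division by `P(T(v) = 1)` is legitimate also at the root, because every tree
containing a one-letter word contains `λ`.
-/

section Probability

variable {A : Type*} [DecidableEq A] {TT : Finset (Finset (List A))} {π : Finset (List A) → ℝ}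

lemma prOf_congr {E E' : Finset (List A) → Prop} (h : ∀ t, E t ↔ E' t) :
    prOf TT π E = prOf TT π E' :=
  congrArg (prOf TT π) (funext fun t => propext (h t))

lemma prOf_nonneg (hπ0 : ∀ t, 0 ≤ π t) (E : Finset (List A) → Prop) : 0 ≤ prOf TT π E :=
  Finset.sum_nonneg fun t _ => by split_ifs <;> simp [hπ0]

lemma prOf_mono (hπ0 : ∀ t, 0 ≤ π t) {E E' : Finset (List A) → Prop}
    (h : ∀ t ∈ TT, E t → E' t) : prOf TT π E ≤ prOf TT π E' :=
  Finset.sum_le_sum fun t ht => by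
    by_cases hE : E t
    · simp [hE, h t ht hE]
    · simp only [hE, if_false]; split_ifs <;> simp [hπ0]

lemma prOf_and_add_prOf_and_not (E P : Finset (List A) → Prop) :
    prOf TT π (fun t => E t ∧ P t) + prOf TT π (fun t => E t ∧ ¬ P t) = prOf TT π E := by
  simp only [prOf, ← Finset.sum_add_distrib]
  refine Finset.sum_congr rfl fun t _ => ?_
  by_cases hE : E t <;> by_cases hP : P t <;> simp [hE, hP]

lemma exists_of_prOf_pos {E : Finset (List A) → Prop} (h : 0 < prOf TT π E) :
    ∃ t ∈ TT, E t := by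
  by_contra! hE
  exact h.ne' (Finset.sum_eq_zero fun t ht => if_neg (hE t ht))

end Probability

def AgreesOn {A : Type*} (ε : List A → Bool) (S t : Finset (List A)) : Prop :=
  ∀ u ∈ S, (u ∈ t ↔ ε u = true)

lemma agreesOn_iff {A : Type*} [DecidableEq A] (ε : List A → Bool) (S t : Finset (List A)) :
    AgreesOn ε S t ↔
      S.filter (fun u => ε u = true) ⊆ t ∧ ∀ u ∈ S.filter (fun u => ε u = false), u ∉ t := by
  simp only [AgreesOn, Finset.subset_iff, Finset.mem_filter, and_imp, ← forall_and]
  refine forall_congr' fun u => forall_congr' fun _ => ?_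
  cases ε u <;> simp

lemma agreesOn_insert {A : Type*} [DecidableEq A] {ε : List A → Bool} {w : List A}
    {S t : Finset (List A)} :
    AgreesOn ε (insert w S) t ↔ (w ∈ t ↔ ε w = true) ∧ AgreesOn ε S t :=
  Finset.forall_mem_insert _ _ _

namespace MarkovHyp

variable {A : Type*} [DecidableEq A] {V : Finset (List A)} {TT : Finset (Finset (List A))}
  {π : Finset (List A) → ℝ} {f : List A → List A}

lemma apply_ne_self (hM : MarkovHyp V TT π f) {w : List A} (hw : w ∈ V) (hw0 : w ≠ []) :
    f w ≠ w := fun h => (hM.1 w hw hw0).2.1.ne (by rw [h])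

lemma apply_mem (hM : MarkovHyp V TT π f) (hTT : ∀ t ∈ TT, t ⊆ V) {w : List A} (hw : w ∈ V)
    (hw0 : w ≠ []) : f w ∈ V := by
  obtain ⟨t, ht, hwt⟩ := exists_of_prOf_pos ((hM.1 w hw hw0).1.trans (hM.1 w hw hw0).2.1)
  exact hTT t ht hwt

lemma prOf_mem_pos (hM : MarkovHyp V TT π f) (hπ0 : ∀ t, 0 ≤ π t)
    (hTT : ∀ t ∈ TT, ∀ (a : A) (w : List A), a :: w ∈ t → w ∈ t) {a : A} (ha : [a] ∈ V)
    {v : List A} (hv : v ∈ V) : 0 < prOf TT π (fun t => v ∈ t) := by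
  rcases eq_or_ne v [] with rfl | hv0
  · exact (hM.1 [a] ha (List.cons_ne_nil a [])).1.trans_le
      (prOf_mono hπ0 fun t ht => hTT t ht a [])
  · exact (hM.1 v hv hv0).1

/-- Hypothesis (c) with `I = {f w} ∪ {u ∈ S | ε u}` and `J = {u ∈ S | ¬ ε u}`; when the
conditioning event is null, both sides vanish. -/
lemma prOf_mem_and_agreesOn (hM : MarkovHyp V TT π f) (hπ0 : ∀ t, 0 ≤ π t)
    (hTT : ∀ t ∈ TT, t ⊆ V) {w : List A} (hw : w ∈ V) (hw0 : w ≠ []) (ε : List A → Bool)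
    {S : Finset (List A)} (hS : S ⊆ V) (hwS : w ∉ S) :
    prOf TT π (fun t => w ∈ t ∧ f w ∈ t ∧ AgreesOn ε S t) =
      prOf TT π (fun t => f w ∈ t ∧ AgreesOn ε S t) *
        (prOf TT π (fun t => w ∈ t ∧ f w ∈ t) / prOf TT π (fun t => f w ∈ t)) := by
  set I := insert (f w) (S.filter fun u => ε u = true)
  set J := S.filter fun u => ε u = false
  have hIJ : ∀ t, (I ⊆ t ∧ ∀ u ∈ J, u ∉ t) ↔ (f w ∈ t ∧ AgreesOn ε S t) := fun t => by
    rw [agreesOn_iff, Finset.insert_subset_iff, and_assoc]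
  rcases (prOf_nonneg hπ0 fun t => f w ∈ t ∧ AgreesOn ε S t).eq_or_lt with h0 | hpos
  · have hle : prOf TT π (fun t => w ∈ t ∧ f w ∈ t ∧ AgreesOn ε S t) ≤ 0 :=
      h0 ▸ prOf_mono hπ0 fun t _ ht => ht.2
    rw [← h0, zero_mul]
    exact hle.antisymm (prOf_nonneg hπ0 _)
  have hI : I ⊆ V :=
    Finset.insert_subset (hM.apply_mem hTT hw hw0) ((Finset.filter_subset _ _).trans hS)
  have hwIJ : w ∉ I ∪ J := by
    simp only [I, J, Finset.mem_union, Finset.mem_insert, Finset.mem_filter, hwS, false_and,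
      or_false]
    exact (hM.apply_ne_self hw hw0).symm
  have hc := hM.2.2 w hw hw0 I J hI ((Finset.filter_subset _ _).trans hS)
    (Finset.mem_insert_self _ _) hwIJ ((prOf_congr hIJ).symm ▸ hpos)
  rw [prOf_congr hIJ, prOf_congr fun t => and_congr_right' (hIJ t),
    div_eq_iff hpos.ne'] at hc
  rw [hc, mul_comm]

lemma prOf_agreesOn_insert (hM : MarkovHyp V TT π f) (hπ0 : ∀ t, 0 ≤ π t)
    (hTT : ∀ t ∈ TT, t ⊆ V) {w : List A} (hw : w ∈ V) (hw0 : w ≠ []) (ε : List A → Bool)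
    {S : Finset (List A)} (hS : S ⊆ V) (hwS : w ∉ S) :
    prOf TT π (fun t => f w ∈ t ∧ AgreesOn ε (insert w S) t) =
      prOf TT π (fun t => f w ∈ t ∧ AgreesOn ε S t) *
        (prOf TT π (fun t => f w ∈ t ∧ (w ∈ t ↔ ε w = true)) / prOf TT π (fun t => f w ∈ t)) := by
  have hfw : prOf TT π (fun t => f w ∈ t) ≠ 0 :=
    ((hM.1 w hw hw0).1.trans (hM.1 w hw hw0).2.1).ne'
  have hmarkov : prOf TT π (fun t => (f w ∈ t ∧ AgreesOn ε S t) ∧ w ∈ t) *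
        prOf TT π (fun t => f w ∈ t) =
      prOf TT π (fun t => f w ∈ t ∧ AgreesOn ε S t) * prOf TT π (fun t => f w ∈ t ∧ w ∈ t) := by
    rw [prOf_congr fun t => and_comm,
      prOf_congr (E := fun t => f w ∈ t ∧ w ∈ t) fun t => and_comm,
      hM.prOf_mem_and_agreesOn hπ0 hTT hw hw0 ε hS hwS]
    field_simp
  cases hε : ε w
  · have hS_split := prOf_and_add_prOf_and_not (TT := TT) (π := π)
      (fun t => f w ∈ t ∧ AgreesOn ε S t) (fun t => w ∈ t)
    have hfw_split := prOf_and_add_prOf_and_not (TT := TT) (π := π)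
      (fun t => f w ∈ t) (fun t => w ∈ t)
    have hlhs : prOf TT π (fun t => f w ∈ t ∧ AgreesOn ε (insert w S) t) =
        prOf TT π (fun t => (f w ∈ t ∧ AgreesOn ε S t) ∧ w ∉ t) := prOf_congr fun t => by
      simp only [agreesOn_insert, hε, Bool.false_eq_true, iff_false]; tauto
    have hlit : prOf TT π (fun t => f w ∈ t ∧ (w ∈ t ↔ false = true)) =
        prOf TT π (fun t => f w ∈ t ∧ w ∉ t) := prOf_congr fun t => by simp
    rw [hlhs, hlit, ← mul_div_assoc, eq_div_iff hfw]
    linear_combination prOf TT π (fun t => f w ∈ t) * hS_split - hmarkov -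
      prOf TT π (fun t => f w ∈ t ∧ AgreesOn ε S t) * hfw_split
  · have hlhs : prOf TT π (fun t => f w ∈ t ∧ AgreesOn ε (insert w S) t) =
        prOf TT π (fun t => (f w ∈ t ∧ AgreesOn ε S t) ∧ w ∈ t) := prOf_congr fun t => by
      simp only [agreesOn_insert, hε, iff_true]; tauto
    have hlit : prOf TT π (fun t => f w ∈ t ∧ (w ∈ t ↔ true = true)) =
        prOf TT π (fun t => f w ∈ t ∧ w ∈ t) := prOf_congr fun t => by simp
    rw [hlhs, hlit, ← mul_div_assoc, eq_div_iff hfw]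
    exact hmarkov

lemma prOf_agreesOn_children (hM : MarkovHyp V TT π f) (hπ0 : ∀ t, 0 ≤ π t)
    (hTT : ∀ t ∈ TT, t ⊆ V) (ε : List A → Bool) {v : List A} {S : Finset (List A)}
    (hS : S ⊆ V.filter fun w => w ≠ [] ∧ f w = v) :
    prOf TT π (fun t => v ∈ t ∧ AgreesOn ε S t) =
      prOf TT π (fun t => v ∈ t) *
        ∏ w ∈ S, prOf TT π (fun t => v ∈ t ∧ (w ∈ t ↔ ε w = true)) /
          prOf TT π (fun t => v ∈ t) := by
  induction S using Finset.induction_on with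
  | empty => simp [AgreesOn]
  | insert w S hwS ih =>
    obtain ⟨hw, hw0, rfl⟩ := Finset.mem_filter.1 (hS (Finset.mem_insert_self w S))
    have hS' := (Finset.insert_subset_iff.1 hS).2
    rw [hM.prOf_agreesOn_insert hπ0 hTT hw hw0 ε (hS'.trans (Finset.filter_subset _ _)) hwS,
      ih hS', Finset.prod_insert hwS]
    ring

end MarkovHyp

theorem stmt_4_general
    {A : Type*} [DecidableEq A] [Nonempty A]
    (L : ℕ) (hL : 0 < L)
    (V : Finset (List A)) (hV : ∀ l : List A, l ∈ V ↔ l.length ≤ L)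
    (TT : Finset (Finset (List A)))
    (hTT : ∀ t, t ∈ TT ↔ t ⊆ V ∧ ∀ (a : A) (w : List A), a :: w ∈ t → w ∈ t)
    (π : Finset (List A) → ℝ)
    (hπ0 : ∀ t, 0 ≤ π t)
    (f : List A → List A)
    (hM : MarkovHyp V TT π f) :
    ∀ v ∈ V, ∀ ε : List A → Bool,
      prOf TT π (fun t => v ∈ t ∧
            ∀ w ∈ V.filter (fun w => w ≠ [] ∧ f w = v), ((w ∈ t) ↔ ε w = true)) /
          prOf TT π (fun t => v ∈ t)
        = ∏ w ∈ V.filter (fun w => w ≠ [] ∧ f w = v),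
            prOf TT π (fun t => v ∈ t ∧ ((w ∈ t) ↔ ε w = true)) /
              prOf TT π (fun t => v ∈ t) := by
  intro v hv ε
  obtain ⟨a⟩ := ‹Nonempty A›
  have ha : [a] ∈ V := (hV [a]).2 hL
  have hv_pos := hM.prOf_mem_pos hπ0 (fun t ht => ((hTT t).1 ht).2) ha hv
  have hchildren := hM.prOf_agreesOn_children hπ0 (fun t ht => ((hTT t).1 ht).1) ε
    (Finset.Subset.refl (V.filter fun w => w ≠ [] ∧ f w = v))
  exact (div_eq_iff hv_pos.ne').2 (hchildren.trans (mul_comm _ _))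

/-- Lemma A.3, independence part: if the random tree `T` with law `π`
satisfies the Markov hypotheses with tree-shift `f`, then for every `v ∈ V`, conditionally
on `T(v) = 1` the variables `T(w)`, `w ∈ f⁻¹(v)`, are independent: for every
`ε : f⁻¹(v) → {0,1}`,
`P(T(w) = ε(w) ∀ w ∈ f⁻¹(v) | T(v) = 1) = ∏_{w ∈ f⁻¹(v)} P(T(w) = ε(w) | T(v) = 1)`. -/
theorem stmt_4
    {A : Type*} [Fintype A] [DecidableEq A] [Nonempty A]
    (L : ℕ) (hL : 0 < L)
    (V : Finset (List A)) (hV : ∀ l : List A, l ∈ V ↔ l.length ≤ L)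
    (TT : Finset (Finset (List A)))
    (hTT : ∀ t, t ∈ TT ↔ t ⊆ V ∧ ∀ (a : A) (w : List A), a :: w ∈ t → w ∈ t)
    (π : Finset (List A) → ℝ)
    (hπ0 : ∀ t, 0 ≤ π t) (hπ1 : ∑ t ∈ TT, π t = 1)
    (f : List A → List A) (hf : IsTreeShift V f)
    (hM : MarkovHyp V TT π f) :
    ∀ v ∈ V, ∀ ε : List A → Bool,
      prOf TT π (fun t => v ∈ t ∧
            ∀ w ∈ V.filter (fun w => w ≠ [] ∧ f w = v), ((w ∈ t) ↔ ε w = true)) /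
          prOf TT π (fun t => v ∈ t)
        = ∏ w ∈ V.filter (fun w => w ≠ [] ∧ f w = v),
            prOf TT π (fun t => v ∈ t ∧ ((w ∈ t) ↔ ε w = true)) /
              prOf TT π (fun t => v ∈ t) :=
  stmt_4_general L hL V hV TT hTT π hπ0 f hM
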